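/- There exist universal constants C₀ > 0 (sufficiently small) and c > 0 such that the following holds. Let δ > 0, 0 < C < 1/2, and positive integers i, k, m satisfy 1 ≤ i ≤ k, i even, and k² ≤ C₀ C² m. Then (δ/m) · |Σ_{x=0}^m 2^{−m} binom(m,x) · h(m,x) · P_i((x − m/2)/(Cm))| ≤ c · δ i^{3/2} / (C² m), where h(m,x) := 2x² − 2mx + m(m−1)/2. -/

import Mathlib

/-!
Write `u = x - m/2`, so that `h(m,x) = 2u² - m/2`, and let `E` be the expectation under
`Binomial(m, 1/2)`. Expanding `P_i` into monomials turns the sum into a combination of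
`W(n) = ∑ₓ G'_{m,x}(0) uⁿ = 2 E[u^(n+2)] - (m/2) E[uⁿ]`. The constant monomial contributes
`W(0) = 0`, the derivative of a total mass. The even moments satisfy
`E[u^(2s)] ≤ (2s)!/s! (m/4)^s` (induction on `m`: passing from `m` to `m + 1` replaces `u` by
`u ± 1/2`), and the coefficient of `x^(2s)` in `P_i` is at most `(2i)^(2s) / ((2s)! √i)` because
`binom(i,j) ≤ 2^i/√i` for even `i`. Hence the monomial of degree `2s ≥ 2` contributes at most
`m (2s+1)/s! Qˢ / √i` with `Q = i²/(C²m) ≤ 1/2`, and these contributions form a geometric series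
of total `O(i²/(C²√i))`.
-/

open Finset

/-- `h(n,x) = 2x² − 2nx + n(n−1)/2`. -/
noncomputable def hIsing (n x : ℕ) : ℝ :=
  2 * (x : ℝ) ^ 2 - 2 * (n : ℝ) * (x : ℝ) + (n : ℝ) * ((n : ℝ) - 1) / 2

/-- The `i`-th Legendre polynomial (as a function), via its explicit expansion
`P_i(x) = 2^{−i} Σ_{j=0}^{⌊i/2⌋} (−1)^j binom(i,j) binom(2i−2j, i) x^{i−2j}`. -/
noncomputable def legendre (i : ℕ) (x : ℝ) : ℝ :=
  ((2 : ℝ) ^ i)⁻¹ * ∑ j ∈ Finset.range (i / 2 + 1),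
    (-1 : ℝ) ^ j * (i.choose j : ℝ) * ((2 * i - 2 * j).choose i : ℝ) * x ^ (i - 2 * j)

open scoped Nat

theorem sum_range_two_mul_add_one_eq_sum_even {M : Type*} [AddCommMonoid M] (f : ℕ → M)
    (hf : ∀ j, Odd j → f j = 0) (n : ℕ) :
    ∑ j ∈ range (2 * n + 1), f j = ∑ t ∈ range (n + 1), f (2 * t) := by
  induction n with
  | zero => simp
  | succ n ih =>
    rw [show 2 * (n + 1) + 1 = 2 * n + 1 + 1 + 1 by ring, sum_range_succ, sum_range_succ, ih,
      hf _ (odd_two_mul_add_one n), add_zero, sum_range_succ _ (n + 1)]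
    rfl

theorem sub_pow_two_mul_add_add_pow_two_mul {R : Type*} [CommRing R] (u v : R) (s : ℕ) :
    (u - v) ^ (2 * s) + (u + v) ^ (2 * s) =
      2 * ∑ t ∈ range (s + 1), ((2 * s).choose (2 * t) : R) * u ^ (2 * t) * (v ^ 2) ^ (s - t) := by
  rw [sub_eq_add_neg, add_pow, add_pow, ← sum_add_distrib,
    sum_range_two_mul_add_one_eq_sum_even, mul_sum]
  · refine sum_congr rfl fun t ht => ?_
    have hts : 2 * s - 2 * t = 2 * (s - t) := by omega
    rw [hts, pow_mul, pow_mul, neg_sq]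
    ring
  · intro j hj
    rcases le_or_gt j (2 * s) with hle | hlt
    · have hodd : Odd (2 * s - j) := by
        obtain ⟨a, rfl⟩ := hj
        exact ⟨s - a - 1, by omega⟩
      rw [hodd.neg_pow]
      ring
    · simp [Nat.choose_eq_zero_of_lt hlt]

theorem centralBinom_sq_mul_le (r : ℕ) : r.centralBinom ^ 2 * (2 * r + 1) ≤ 16 ^ r := by
  induction r with
  | zero => simp
  | succ r ih =>
    have hrec := Nat.succ_mul_centralBinom_succ r
    have key :
        ((r + 1) * (r + 1).centralBinom) ^ 2 * (2 * (r + 1) + 1) ≤ (r + 1) ^ 2 * 16 ^ (r + 1) :=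
      calc ((r + 1) * (r + 1).centralBinom) ^ 2 * (2 * (r + 1) + 1)
          = 4 * ((2 * r + 1) * (2 * r + 3)) * (r.centralBinom ^ 2 * (2 * r + 1)) := by
            rw [hrec]; ring
        _ ≤ 4 * (4 * (r + 1) ^ 2) * 16 ^ r :=
            Nat.mul_le_mul (Nat.mul_le_mul_left _ (by nlinarith)) ih
        _ = (r + 1) ^ 2 * 16 ^ (r + 1) := by ring
    rw [mul_pow, mul_assoc] at key
    exact Nat.le_of_mul_le_mul_left key (by positivity)

theorem choose_mul_sqrt_le {i : ℕ} (hi : Even i) (j : ℕ) :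
    (i.choose j : ℝ) * √i ≤ 2 ^ i := by
  obtain ⟨r, rfl⟩ := hi
  rw [← two_mul]
  have hc : ((2 * r).choose j : ℝ) ≤ r.centralBinom := by
    exact_mod_cast Nat.choose_le_centralBinom j r
  have hsq : ((r.centralBinom : ℝ) * √(2 * r : ℕ)) ^ 2 ≤ ((2 : ℝ) ^ (2 * r)) ^ 2 := by
    rw [mul_pow, Real.sq_sqrt (Nat.cast_nonneg _), ← pow_mul, show 2 * r * 2 = 4 * r by ring,
      pow_mul]
    norm_num
    exact_mod_cast (Nat.mul_le_mul_left _ (Nat.le_succ _)).trans (centralBinom_sq_mul_le r)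
  calc ((2 * r).choose j : ℝ) * √(2 * r : ℕ) ≤ r.centralBinom * √(2 * r : ℕ) := by gcongr
    _ ≤ 2 ^ (2 * r) := (pow_le_pow_iff_left₀ (by positivity) (by positivity) two_ne_zero).1 hsq

theorem choose_mul_factorial_div_le {s t : ℕ} (h : t ≤ s) :
    ((2 * s).choose (2 * t) : ℝ) * ((2 * t)! / t !) ≤ s.choose t * ((2 * s)! / s !) := by
  rw [Nat.cast_choose ℝ (by omega : 2 * t ≤ 2 * s), Nat.cast_choose ℝ h,
    show 2 * s - 2 * t = 2 * (s - t) by omega]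
  have key : ((s - t)! : ℝ) ≤ (2 * (s - t))! := by exact_mod_cast Nat.factorial_le (by omega)
  calc ((2 * s)! : ℝ) / ((2 * t)! * (2 * (s - t))!) * ((2 * t)! / t !)
      = (2 * s)! / (t ! * (2 * (s - t))!) := by field_simp
    _ ≤ (2 * s)! / (t ! * (s - t)!) := by gcongr
    _ = s ! / (t ! * (s - t)!) * ((2 * s)! / s !) := by field_simp

noncomputable def binomCentralMoment (m n : ℕ) : ℝ :=
  ∑ x ∈ range (m + 1), ((2 : ℝ) ^ m)⁻¹ * m.choose x * ((x : ℝ) - m / 2) ^ n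

theorem binomCentralMoment_zero_right (m : ℕ) : binomCentralMoment m 0 = 1 := by
  simp only [binomCentralMoment, pow_zero, mul_one, ← mul_sum]
  rw [← Nat.cast_sum, Nat.sum_range_choose, Nat.cast_pow, Nat.cast_two,
    inv_mul_cancel₀ (by positivity)]

theorem binomCentralMoment_two_mul_nonneg (m s : ℕ) : 0 ≤ binomCentralMoment m (2 * s) :=
  sum_nonneg fun x _ => by rw [pow_mul]; positivity

theorem binomCentralMoment_succ (m n : ℕ) :
    binomCentralMoment (m + 1) n = ∑ x ∈ range (m + 1), ((2 : ℝ) ^ m)⁻¹ * m.choose x *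
      ((((x : ℝ) - m / 2 - 1 / 2) ^ n + ((x : ℝ) - m / 2 + 1 / 2) ^ n) / 2) := by
  unfold binomCentralMoment
  simp_rw [mul_assoc, ← mul_sum]
  rw [sum_choose_succ_mul (fun x _ => ((x : ℝ) - ↑(m + 1) / 2) ^ n), ← sum_add_distrib, pow_succ,
    mul_inv, mul_assoc, mul_sum]
  congr 1
  refine sum_congr rfl fun x _ => ?_
  push_cast
  ring

theorem binomCentralMoment_succ_two_mul (m s : ℕ) :
    binomCentralMoment (m + 1) (2 * s) =
      ∑ t ∈ range (s + 1), ((2 * s).choose (2 * t) : ℝ) * (1 / 4) ^ (s - t) *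
        binomCentralMoment m (2 * t) := by
  rw [binomCentralMoment_succ]
  simp only [sub_pow_two_mul_add_add_pow_two_mul, mul_div_cancel_left₀ _ (two_ne_zero' ℝ)]
  simp only [binomCentralMoment, mul_sum]
  rw [sum_comm]
  refine sum_congr rfl fun t _ => sum_congr rfl fun x _ => ?_
  norm_num
  ring

theorem binomCentralMoment_two (m : ℕ) : binomCentralMoment m 2 = m / 4 := by
  induction m with
  | zero => simp [binomCentralMoment]
  | succ m ih =>
    calc binomCentralMoment (m + 1) 2 = binomCentralMoment (m + 1) (2 * 1) := rfl
      _ = (m + 1 : ℕ) / 4 := by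
        rw [binomCentralMoment_succ_two_mul]
        simp [sum_range_succ, binomCentralMoment_zero_right, ih, add_div, add_comm]

theorem binomCentralMoment_two_mul_le (m s : ℕ) :
    binomCentralMoment m (2 * s) ≤ (2 * s)! / s ! * (m / 4) ^ s := by
  induction m generalizing s with
  | zero => cases s <;> simp [binomCentralMoment]
  | succ m ih =>
    rw [binomCentralMoment_succ_two_mul]
    calc ∑ t ∈ range (s + 1), ((2 * s).choose (2 * t) : ℝ) * (1 / 4) ^ (s - t) *
          binomCentralMoment m (2 * t)
        ≤ ∑ t ∈ range (s + 1), (s.choose t : ℝ) * ((2 * s)! / s !) * (1 / 4) ^ (s - t) *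
          (m / 4) ^ t := by
          refine sum_le_sum fun t ht => ?_
          have hts : t ≤ s := Nat.lt_succ_iff.1 (mem_range.1 ht)
          calc ((2 * s).choose (2 * t) : ℝ) * (1 / 4) ^ (s - t) * binomCentralMoment m (2 * t)
              ≤ ((2 * s).choose (2 * t) : ℝ) * (1 / 4) ^ (s - t) *
                  ((2 * t)! / t ! * (m / 4) ^ t) := by
                gcongr; exact ih t
            _ = ((2 * s).choose (2 * t) : ℝ) * ((2 * t)! / t !) * (1 / 4) ^ (s - t) *
                  (m / 4) ^ t := by
                ring
            _ ≤ _ := by gcongr ?_ * _ * _; exact choose_mul_factorial_div_le hts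
      _ = (2 * s)! / s ! * ((m + 1 : ℕ) / 4) ^ s := by
          rw [Nat.cast_succ, add_div, add_pow, mul_sum]
          refine sum_congr rfl fun t _ => ?_
          ring

theorem hIsing_eq (m x : ℕ) : hIsing m x = 2 * ((x : ℝ) - m / 2) ^ 2 - m / 2 := by
  unfold hIsing
  ring

/-- `∑ₓ G'_{m,x}(0) (x - m/2)ⁿ`. -/
noncomputable def hIsingMoment (m n : ℕ) : ℝ :=
  ∑ x ∈ range (m + 1), ((2 : ℝ) ^ m)⁻¹ * m.choose x * hIsing m x * ((x : ℝ) - m / 2) ^ n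

theorem hIsingMoment_eq (m n : ℕ) :
    hIsingMoment m n = 2 * binomCentralMoment m (n + 2) - m / 2 * binomCentralMoment m n := by
  simp only [hIsingMoment, binomCentralMoment, hIsing_eq, mul_sum, ← sum_sub_distrib]
  exact sum_congr rfl fun x _ => by ring

theorem hIsingMoment_zero (m : ℕ) : hIsingMoment m 0 = 0 := by
  rw [hIsingMoment_eq, binomCentralMoment_two, binomCentralMoment_zero_right]
  ring

theorem abs_hIsingMoment_two_mul_le (m s : ℕ) :
    |hIsingMoment m (2 * s)| ≤ m * (2 * s + 1) * ((2 * s)! / s !) * (m / 4) ^ s := by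
  have hfac : ((2 * (s + 1))! / (s + 1)! : ℝ) = 2 * (2 * s + 1) * ((2 * s)! / s !) := by
    rw [show 2 * (s + 1) = 2 * s + 1 + 1 by ring]
    push_cast [Nat.factorial_succ]
    field_simp
    ring
  rw [hIsingMoment_eq, show 2 * s + 2 = 2 * (s + 1) by ring]
  apply abs_sub_le_of_nonneg_of_le
  · exact mul_nonneg zero_le_two (binomCentralMoment_two_mul_nonneg m _)
  · calc 2 * binomCentralMoment m (2 * (s + 1))
        ≤ 2 * ((2 * (s + 1))! / (s + 1)! * (m / 4) ^ (s + 1)) := by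
          gcongr; exact binomCentralMoment_two_mul_le m _
      _ = _ := by rw [hfac, pow_succ]; ring
  · exact mul_nonneg (by positivity) (binomCentralMoment_two_mul_nonneg m _)
  · calc m / 2 * binomCentralMoment m (2 * s) ≤ m / 2 * ((2 * s)! / s ! * (m / 4) ^ s) := by
          gcongr; exact binomCentralMoment_two_mul_le m _
      _ ≤ m * (2 * s + 1) * ((2 * s)! / s ! * (m / 4) ^ s) := by
          gcongr
          nlinarith [(Nat.cast_nonneg m : (0 : ℝ) ≤ m), (Nat.cast_nonneg s : (0 : ℝ) ≤ s)]
      _ = _ := by ring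

noncomputable def legendreCoeff (i j : ℕ) : ℝ :=
  ((2 : ℝ) ^ i)⁻¹ * ((-1) ^ j * i.choose j * (2 * i - 2 * j).choose i)

theorem legendre_eq_sum (i : ℕ) (x : ℝ) :
    legendre i x = ∑ j ∈ range (i / 2 + 1), legendreCoeff i j * x ^ (i - 2 * j) := by
  simp only [legendre, legendreCoeff, mul_sum, mul_assoc]

theorem abs_legendreCoeff_mul_sqrt_le {i j : ℕ} (hi : Even i) (hj : 2 * j ≤ i) :
    |legendreCoeff i j| * √i ≤ (2 * i) ^ (i - 2 * j) / (i - 2 * j)! := by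
  have hcentral : (i.choose j : ℝ) * √i / 2 ^ i ≤ 1 :=
    div_le_one_of_le₀ (choose_mul_sqrt_le hi j) (by positivity)
  have htail : ((2 * i - 2 * j).choose i : ℝ) ≤ (2 * i) ^ (i - 2 * j) / (i - 2 * j)! := by
    rw [← Nat.choose_symm (by omega), show 2 * i - 2 * j - i = i - 2 * j by omega]
    refine (Nat.choose_le_pow_div _ _).trans ?_
    gcongr
    exact_mod_cast Nat.sub_le _ _
  calc |legendreCoeff i j| * √i = (i.choose j : ℝ) * √i / 2 ^ i * (2 * i - 2 * j).choose i := by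
        simp only [legendreCoeff, abs_mul, abs_inv, abs_pow, abs_neg, abs_one, one_pow,
          Nat.abs_cast, abs_two]
        ring
    _ ≤ 1 * ((2 * i) ^ (i - 2 * j) / (i - 2 * j)!) := by gcongr
    _ = _ := one_mul _

theorem sum_mul_legendre {ι : Type*} (s : Finset ι) (w y : ι → ℝ) (i : ℕ) :
    ∑ x ∈ s, w x * legendre i (y x) =
      ∑ j ∈ range (i / 2 + 1), legendreCoeff i j * ∑ x ∈ s, w x * y x ^ (i - 2 * j) := by
  simp only [legendre_eq_sum, mul_sum]
  rw [sum_comm]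
  exact sum_congr rfl fun j _ => sum_congr rfl fun x _ => by ring

theorem sum_hIsing_mul_legendre (m i : ℕ) (a : ℝ) :
    ∑ x ∈ range (m + 1),
        ((2 : ℝ) ^ m)⁻¹ * m.choose x * hIsing m x * legendre i (((x : ℝ) - m / 2) / a) =
      ∑ j ∈ range (i / 2 + 1),
        legendreCoeff i j * (hIsingMoment m (i - 2 * j) / a ^ (i - 2 * j)) := by
  simp only [sum_mul_legendre, hIsingMoment, div_pow, sum_div, mul_div_assoc]

theorem sqrt_mul_abs_legendreCoeff_mul_hIsingMoment_le {i j s m : ℕ} {C : ℝ} (hi : Even i)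
    (hij : i = 2 * j + 2 * s) (hC : 0 < C) (hm : 0 < m) :
    √i * |legendreCoeff i j * (hIsingMoment m (2 * s) / (C * m) ^ (2 * s))| ≤
      m * (2 * s + 1) / s ! * ((i : ℝ) ^ 2 / (C ^ 2 * m)) ^ s := by
  have hcoeff := abs_legendreCoeff_mul_sqrt_le hi (j := j) (by omega)
  rw [show i - 2 * j = 2 * s by omega] at hcoeff
  have hpow : (2 * (i : ℝ)) ^ (2 * s) * (m / 4) ^ s / (C * m) ^ (2 * s) =
      ((i : ℝ) ^ 2 / (C ^ 2 * m)) ^ s := by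
    have hm' : (m : ℝ) ≠ 0 := by positivity
    rw [pow_mul, pow_mul, ← mul_pow, ← div_pow]
    congr 1
    field_simp
    ring
  calc √i * |legendreCoeff i j * (hIsingMoment m (2 * s) / (C * m) ^ (2 * s))|
      = |legendreCoeff i j| * √i * |hIsingMoment m (2 * s)| / (C * m) ^ (2 * s) := by
        rw [abs_mul, abs_div, abs_of_pos (by positivity : (0 : ℝ) < (C * m) ^ (2 * s))]
        ring
    _ ≤ (2 * i) ^ (2 * s) / (2 * s)! * (m * (2 * s + 1) * ((2 * s)! / s !) * (m / 4) ^ s) /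
          (C * m) ^ (2 * s) := by
        gcongr
        exact abs_hIsingMoment_two_mul_le m s
    _ = _ := by
        rw [← hpow]
        field_simp

theorem mul_two_mul_add_one_div_factorial_mul_pow_le {m Q : ℝ} {s : ℕ} (hs : 1 ≤ s) (hm : 0 ≤ m)
    (hQ0 : 0 ≤ Q) (hQ : Q ≤ 1 / 2) :
    m * (2 * s + 1) / s ! * Q ^ s ≤ 3 * (m * Q) * (1 / 2) ^ (s - 1) := by
  have hfac : (2 * s + 1 : ℝ) / s ! ≤ 3 := by
    rw [div_le_iff₀ (by positivity)]
    exact_mod_cast (by linarith [Nat.self_le_factorial s, Nat.factorial_pos s] :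
      2 * s + 1 ≤ 3 * s !)
  have hpow : Q ^ s ≤ Q * (1 / 2) ^ (s - 1) := by
    rw [← mul_pow_sub_one (by omega : s ≠ 0)]
    gcongr
  calc m * (2 * s + 1) / s ! * Q ^ s = m * ((2 * s + 1) / s !) * Q ^ s := by rw [mul_div_assoc]
    _ ≤ m * 3 * (Q * (1 / 2) ^ (s - 1)) := by gcongr
    _ = 3 * (m * Q) * (1 / 2) ^ (s - 1) := by ring

theorem sqrt_mul_abs_sum_hIsing_mul_legendre_le {i m : ℕ} {C : ℝ} (hi : Even i) (hC : 0 < C)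
    (hm : 0 < m) (hQ : (i : ℝ) ^ 2 / (C ^ 2 * m) ≤ 1 / 2) :
    √i * |∑ x ∈ range (m + 1), ((2 : ℝ) ^ m)⁻¹ * m.choose x * hIsing m x *
        legendre i (((x : ℝ) - m / 2) / (C * m))| ≤ 6 * (i ^ 2 / C ^ 2) := by
  have hmQ : m * ((i : ℝ) ^ 2 / (C ^ 2 * m)) = i ^ 2 / C ^ 2 := by
    have hm' : (m : ℝ) ≠ 0 := by positivity
    field_simp
  set T : ℕ → ℝ := fun j =>
    legendreCoeff i j * (hIsingMoment m (i - 2 * j) / (C * m) ^ (i - 2 * j))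
  obtain ⟨r, hr⟩ := hi
  have hterm : ∀ j ∈ range r, √i * |T j| ≤ 3 * (i ^ 2 / C ^ 2) * (1 / 2) ^ (r - 1 - j) := by
    intro j hj
    have hjr := mem_range.1 hj
    obtain ⟨s, hs, rfl⟩ : ∃ s, 1 ≤ s ∧ r = j + s := ⟨r - j, by omega, by omega⟩
    simp only [T]
    rw [show i - 2 * j = 2 * s by omega, show j + s - 1 - j = s - 1 by omega, ← hmQ]
    exact (sqrt_mul_abs_legendreCoeff_mul_hIsingMoment_le ⟨j + s, hr⟩ (by omega) hC hm).trans
      (mul_two_mul_add_one_div_factorial_mul_pow_le hs m.cast_nonneg (by positivity) hQ)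
  rw [sum_hIsing_mul_legendre, show i / 2 = r by omega, sum_range_succ,
    show i - 2 * r = 0 by omega, hIsingMoment_zero, zero_div, mul_zero, add_zero]
  calc √i * |∑ j ∈ range r, T j| ≤ ∑ j ∈ range r, √i * |T j| := by
        rw [← mul_sum]
        exact mul_le_mul_of_nonneg_left (abs_sum_le_sum_abs _ _) (Real.sqrt_nonneg _)
    _ ≤ ∑ j ∈ range r, 3 * (i ^ 2 / C ^ 2) * (1 / 2) ^ (r - 1 - j) := sum_le_sum hterm
    _ ≤ 3 * (i ^ 2 / C ^ 2) * 2 := by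
        rw [← mul_sum, sum_range_reflect (fun j => (1 / 2 : ℝ) ^ j) r]
        gcongr
        exact sum_geometric_two_le r
    _ = 6 * (i ^ 2 / C ^ 2) := by ring

/-- Bound on the first-order term in the Ising moment-matching analysis for even `i`,
where `G'_{m,x}(0) = 2^{−m} binom(m,x) h(m,x)`. -/
theorem ising_first_order_bound :
    ∃ C₀ c : ℝ, 0 < C₀ ∧ 0 < c ∧
    ∀ (δ C : ℝ) (i k m : ℕ),
      0 < δ → 0 < C → C < 1 / 2 → 1 ≤ i → i ≤ k → Even i → 0 < m →
      (k : ℝ) ^ 2 ≤ C₀ * C ^ 2 * m →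
      (δ / m) *
        |∑ x ∈ Finset.range (m + 1),
          ((2 : ℝ) ^ m)⁻¹ * (m.choose x : ℝ) * hIsing m x *
            legendre i (((x : ℝ) - (m : ℝ) / 2) / (C * m))| ≤
      c * δ * (i : ℝ) ^ ((3 : ℝ) / 2) / (C ^ 2 * m) := by
  refine ⟨1 / 2, 6, by norm_num, by norm_num, fun δ C i k m hδ hC _ hi hik heven hm hk => ?_⟩
  have hiR : (0 : ℝ) < i := by exact_mod_cast hi
  have hQ : (i : ℝ) ^ 2 / (C ^ 2 * m) ≤ 1 / 2 := by
    rw [div_le_iff₀ (by positivity)]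
    calc (i : ℝ) ^ 2 ≤ k ^ 2 := by gcongr
      _ ≤ 1 / 2 * (C ^ 2 * m) := by linarith
  have hrpow : (i : ℝ) ^ ((3 : ℝ) / 2) = i ^ 2 / √i := by
    rw [Real.sqrt_eq_rpow, ← Real.rpow_natCast, ← Real.rpow_sub hiR]
    norm_num
  have hsqrt : 0 < √(i : ℝ) := Real.sqrt_pos.2 hiR
  calc δ / m * |_| = δ / m * (√i * |_|) / √i := by
        rw [mul_div_assoc, mul_div_cancel_left₀ _ hsqrt.ne']
    _ ≤ δ / m * (6 * (i ^ 2 / C ^ 2)) / √i := by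
        gcongr δ / m * ?_ / _
        exact sqrt_mul_abs_sum_hIsing_mul_legendre_le heven hC hm hQ
    _ = 6 * δ * (i : ℝ) ^ ((3 : ℝ) / 2) / (C ^ 2 * m) := by
        rw [hrpow]
        field_simp
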